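/- Let l ≥ 5 and write {A,B} := A∘B + B∘A for endomorphisms of Λ. Then {H_{η₁η₂η₃}, H_{η₄η₅η₁}} − {H_{η₁η₂η₄}, H_{η₃η₅η₁}} + {H_{η₁η₂η₅}, H_{η₃η₄η₁}} = 0. This realizes the fifth defining relation (of lowest weight −(2ε₁+ε₂+ε₃+ε₄+ε₅)) in the presentation of N₊ of the Hamiltonian Lie superalgebra h(0|2l) given in the paper's Table 2.1.2. -/
import Mathlib


/-- The exterior algebra Λ of ℂ^{2l}, with generators indexed by
`Fin l ⊕ Fin l` (left = ξ's, right = η's). -/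
noncomputable abbrev Lam (l : ℕ) := ExteriorAlgebra ℂ ((Fin l ⊕ Fin l) → ℂ)

/-- The generator of Λ corresponding to index `a` (image of the standard basis). -/
noncomputable def gen (l : ℕ) (a : Fin l ⊕ Fin l) : Lam l :=
  ExteriorAlgebra.ι ℂ (Pi.single a 1)

/-- The generator ξᵢ. -/
noncomputable def xiv (l : ℕ) (i : Fin l) : Lam l := gen l (Sum.inl i)

/-- The generator ηᵢ. -/
noncomputable def etav (l : ℕ) (i : Fin l) : Lam l := gen l (Sum.inr i)

/-- L_g : left exterior multiplication by g. -/
noncomputable def Lmul (l : ℕ) (g : Lam l) : Module.End ℂ (Lam l) :=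
  LinearMap.mulLeft ℂ g

/-- `IsContraction l a D` says that `D` is the contraction ∂_ζ with the dual of
the generator ζ indexed by `a`: it kills 1, sends the generator indexed by `b`
to δ_{ab}·1, and satisfies ∂(xy) = ∂(x)y + (−1)ᵖ x ∂(y) whenever x is a product
of p generators. -/
def IsContraction (l : ℕ) (a : Fin l ⊕ Fin l) (D : Module.End ℂ (Lam l)) : Prop :=
  D 1 = 0 ∧
  (∀ b, D (gen l b) = if a = b then 1 else 0) ∧
  (∀ (p : ℕ) (g : Fin p → (Fin l ⊕ Fin l)) (y : Lam l),
    D ((List.ofFn fun k => gen l (g k)).prod * y) =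
      D ((List.ofFn fun k => gen l (g k)).prod) * y +
        ((-1 : ℂ) ^ p) • ((List.ofFn fun k => gen l (g k)).prod * D y))

/-- The Hamiltonian vector field H_f = Σᵢ (L_{∂_{ξᵢ}f} ∘ ∂_{ηᵢ} + L_{∂_{ηᵢ}f} ∘ ∂_{ξᵢ}),
realized as an endomorphism of Λ; `pd a` is the contraction operator ∂ with the
generator indexed by `a`. -/
noncomputable def Ham (l : ℕ) (pd : (Fin l ⊕ Fin l) → Module.End ℂ (Lam l))
    (f : Lam l) : Module.End ℂ (Lam l) :=
  ∑ i : Fin l,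
    (Lmul l (pd (Sum.inl i) f) ∘ₗ pd (Sum.inr i) +
     Lmul l (pd (Sum.inr i) f) ∘ₗ pd (Sum.inl i))

section Aux

variable {l : ℕ} {pd : (Fin l ⊕ Fin l) → Module.End ℂ (Lam l)}
variable (hpd : ∀ a, IsContraction l a (pd a))
include hpd

/-- The basic anticommutation relation of a contraction with left multiplication
by a generator. -/
theorem pd_gen_mul (a b : Fin l ⊕ Fin l) (y : Lam l) :
    pd a (gen l b * y) = (if a = b then y else 0) - gen l b * pd a y := by
  have h := (hpd a).2.2 1 (fun _ => b) y
  simp only [List.ofFn_succ, List.ofFn_zero, List.prod_cons, List.prod_nil, mul_one,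
    pow_one, neg_smul, one_smul, (hpd a).2.1] at h
  rw [h]
  split_ifs <;> simp [sub_eq_add_neg]

/-- Contraction against multiplication by a general `ι m`. -/
theorem pd_iota_mul (a : Fin l ⊕ Fin l) (m : (Fin l ⊕ Fin l) → ℂ) (y : Lam l) :
    pd a (ExteriorAlgebra.ι ℂ m * y) = m a • y - ExteriorAlgebra.ι ℂ m * pd a y := by
  have hm : (ExteriorAlgebra.ι ℂ m : Lam l) = ∑ b, m b • gen l b := by
    have : m = ∑ b, m b • (Pi.single b 1 : (Fin l ⊕ Fin l) → ℂ) := by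
      funext x
      simp [Finset.sum_apply, Pi.single_apply]
    conv_lhs => rw [this]
    simp [gen, map_sum]
  rw [hm, Finset.sum_mul, map_sum]
  have h1 : ∀ b : Fin l ⊕ Fin l, pd a ((m b • gen l b) * y)
      = (if a = b then m b • y else 0) - (m b • gen l b) * pd a y := by
    intro b
    rw [smul_mul_assoc, map_smul, pd_gen_mul hpd, smul_sub, smul_mul_assoc]
    split_ifs <;> simp
  simp only [h1]
  rw [Finset.sum_sub_distrib, Finset.sum_ite_eq, Finset.sum_mul]
  simp

/-- Contractions pairwise anticommute. -/
theorem pd_pd (a b : Fin l ⊕ Fin l) (x : Lam l) :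
    pd a (pd b x) + pd b (pd a x) = 0 := by
  have key : ∀ x : Lam l, ∀ y : Lam l,
      pd a (pd b (x * y)) + pd b (pd a (x * y))
        = x * (pd a (pd b y) + pd b (pd a y)) := by
    intro x
    induction x using ExteriorAlgebra.induction with
    | algebraMap r =>
        intro y
        simp only [← Algebra.smul_def, map_smul, smul_add]
    | ι m =>
        intro y
        simp only [pd_iota_mul hpd, map_sub, map_smul, mul_add]
        abel
    | mul x₁ x₂ h₁ h₂ =>
        intro y
        rw [mul_assoc, h₁ (x₂ * y), h₂ y, mul_assoc]
    | add x₁ x₂ h₁ h₂ =>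
        intro y
        have e1 := h₁ y
        have e2 := h₂ y
        simp only [add_mul, map_add]
        rw [← e1, ← e2]
        abel
  have h := key x 1
  simpa [(hpd a).1, (hpd b).1] using h

theorem pd_inl_eta (i s : Fin l) (y : Lam l) :
    pd (Sum.inl i) (etav l s * y) = -(etav l s * pd (Sum.inl i) y) := by
  rw [etav, pd_gen_mul hpd]
  simp

theorem pd_inl_eta3 (i a b c : Fin l) :
    pd (Sum.inl i) (etav l a * etav l b * etav l c) = 0 := by
  rw [mul_assoc, pd_inl_eta hpd, pd_inl_eta hpd]
  have : pd (Sum.inl i) (etav l c) = 0 := by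
    rw [etav, (hpd (Sum.inl i)).2.1]
    simp
  rw [this]
  simp

omit hpd in
/-- The span of products of two η's. -/
noncomputable def pairSpan (l : ℕ) : Submodule ℂ (Lam l) :=
  Submodule.span ℂ {x | ∃ c d : Fin l, x = etav l c * etav l d}

theorem pd_inr_eta3_mem (j a b c : Fin l) :
    pd (Sum.inr j) (etav l a * etav l b * etav l c) ∈ pairSpan l := by
  have hp : ∀ c d : Fin l, etav l c * etav l d ∈ pairSpan l := fun c d =>
    Submodule.subset_span ⟨c, d, rfl⟩
  have he : pd (Sum.inr j) (etav l a * etav l b * etav l c) =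
      (if (Sum.inr j : Fin l ⊕ Fin l) = Sum.inr a then etav l b * etav l c else 0)
      - etav l a * ((if (Sum.inr j : Fin l ⊕ Fin l) = Sum.inr b then etav l c else 0)
          - etav l b * (if (Sum.inr j : Fin l ⊕ Fin l) = Sum.inr c then 1 else 0)) := by
    rw [mul_assoc, etav, etav, etav, pd_gen_mul hpd, pd_gen_mul hpd, (hpd _).2.1]
  rw [he]
  split_ifs <;>
    simp only [mul_sub, mul_one, mul_zero, mul_neg, sub_zero, zero_sub, sub_neg_eq_add,
      zero_add, neg_neg, ← mul_assoc] <;>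
    first
      | exact (pairSpan l).zero_mem
      | exact hp _ _
      | exact neg_mem (hp _ _)
      | exact sub_mem (hp _ _) (hp _ _)
      | exact add_mem (hp _ _) (hp _ _)
      | exact sub_mem (hp _ _) (sub_mem (hp _ _) (hp _ _))
      | exact add_mem (sub_mem (hp _ _) (hp _ _)) (hp _ _)
      | exact neg_mem (sub_mem (hp _ _) (hp _ _))

omit hpd in
theorem gen_swap (x y : Fin l ⊕ Fin l) :
    gen l x * gen l y = -(gen l y * gen l x) := by
  have h := ExteriorAlgebra.ι_add_mul_swap (R := ℂ) (M := (Fin l ⊕ Fin l) → ℂ)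
    (Pi.single x (1 : ℂ)) (Pi.single y (1 : ℂ))
  rw [gen, gen]
  exact eq_neg_of_add_eq_zero_left h

omit hpd in
theorem gen_comm_pair (x c d : Fin l ⊕ Fin l) :
    gen l x * (gen l c * gen l d) = gen l c * gen l d * gen l x := by
  rw [← mul_assoc, gen_swap x c, neg_mul, mul_assoc, gen_swap x d, mul_neg, neg_neg,
    mul_assoc]

omit hpd in
theorem pair_comm (a b c d : Fin l) :
    (etav l a * etav l b) * (etav l c * etav l d)
      = (etav l c * etav l d) * (etav l a * etav l b) := by
  simp only [etav]
  rw [mul_assoc, gen_comm_pair, ← mul_assoc, gen_comm_pair, mul_assoc]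

omit hpd in
theorem span_comm {u v : Lam l} (hu : u ∈ pairSpan l) (hv : v ∈ pairSpan l) :
    u * v = v * u := by
  induction hu using Submodule.span_induction with
  | mem x hx =>
      obtain ⟨c, d, rfl⟩ := hx
      induction hv using Submodule.span_induction with
      | mem y hy =>
          obtain ⟨p, q, rfl⟩ := hy
          exact pair_comm c d p q
      | zero => simp
      | add y z _ _ hy hz => rw [mul_add, add_mul, hy, hz]
      | smul r y _ hy => rw [mul_smul_comm, smul_mul_assoc, hy]
  | zero => simp
  | add y z _ _ hy hz => rw [mul_add, add_mul, hy, hz]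
  | smul r y _ hy => rw [mul_smul_comm, smul_mul_assoc, hy]

theorem span_pd_comm {u : Lam l} (hu : u ∈ pairSpan l) (i : Fin l) (y : Lam l) :
    pd (Sum.inl i) (u * y) = u * pd (Sum.inl i) y := by
  induction hu using Submodule.span_induction with
  | mem x hx =>
      obtain ⟨c, d, rfl⟩ := hx
      rw [mul_assoc, pd_inl_eta hpd, pd_inl_eta hpd, mul_neg, neg_neg, mul_assoc]
  | zero => simp
  | add x z _ _ hx hz => rw [add_mul, add_mul, map_add, hx, hz]
  | smul r x _ hx => rw [smul_mul_assoc, smul_mul_assoc, map_smul, hx]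

theorem ham_eta3 (a b c : Fin l) (x : Lam l) :
    Ham l pd (etav l a * etav l b * etav l c) x =
      ∑ i : Fin l,
        pd (Sum.inr i) (etav l a * etav l b * etav l c) * pd (Sum.inl i) x := by
  rw [Ham, LinearMap.sum_apply]
  refine Finset.sum_congr rfl fun i _ => ?_
  rw [LinearMap.add_apply, LinearMap.comp_apply, LinearMap.comp_apply,
    pd_inl_eta3 hpd]
  simp [Lmul]

/-- The key vanishing: the anticommutator of two Hamiltonian fields of pure-η
cubic monomials is zero. -/
theorem ham_anti (a b c p q r : Fin l) :
    (Ham l pd (etav l a * etav l b * etav l c)) ∘ₗ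
        (Ham l pd (etav l p * etav l q * etav l r)) +
      (Ham l pd (etav l p * etav l q * etav l r)) ∘ₗ
        (Ham l pd (etav l a * etav l b * etav l c)) = 0 := by
  set F := etav l a * etav l b * etav l c with hF
  set G := etav l p * etav l q * etav l r with hG
  set u : Fin l → Lam l := fun i => pd (Sum.inr i) F with hu
  set v : Fin l → Lam l := fun i => pd (Sum.inr i) G with hv
  have hum : ∀ i, u i ∈ pairSpan l := fun i => pd_inr_eta3_mem hpd i a b c
  have hvm : ∀ i, v i ∈ pairSpan l := fun i => pd_inr_eta3_mem hpd i p q r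
  refine LinearMap.ext fun x => ?_
  rw [LinearMap.add_apply, LinearMap.comp_apply, LinearMap.comp_apply]
  have e1 : Ham l pd F (Ham l pd G x)
      = ∑ i : Fin l, ∑ j : Fin l,
          u i * (v j * pd (Sum.inl i) (pd (Sum.inl j) x)) := by
    rw [ham_eta3 hpd a b c]
    refine Finset.sum_congr rfl fun i _ => ?_
    rw [ham_eta3 hpd p q r, map_sum, Finset.mul_sum]
    refine Finset.sum_congr rfl fun j _ => ?_
    rw [span_pd_comm hpd (hvm j)]
  have e2 : Ham l pd G (Ham l pd F x)
      = ∑ i : Fin l, ∑ j : Fin l,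
          u i * (v j * pd (Sum.inl j) (pd (Sum.inl i) x)) := by
    rw [ham_eta3 hpd p q r]
    have : ∀ j : Fin l, v j * pd (Sum.inl j) (Ham l pd F x)
        = ∑ i : Fin l, u i * (v j * pd (Sum.inl j) (pd (Sum.inl i) x)) := by
      intro j
      rw [ham_eta3 hpd a b c, map_sum, Finset.mul_sum]
      refine Finset.sum_congr rfl fun i _ => ?_
      rw [span_pd_comm hpd (hum i), ← mul_assoc, ← mul_assoc,
        span_comm (hvm j) (hum i)]
    rw [Finset.sum_congr rfl fun j _ => this j, Finset.sum_comm]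
  rw [e1, e2, ← Finset.sum_add_distrib, LinearMap.zero_apply]
  refine Finset.sum_eq_zero fun i _ => ?_
  rw [← Finset.sum_add_distrib]
  refine Finset.sum_eq_zero fun j _ => ?_
  rw [← mul_add, ← mul_add, pd_pd hpd, mul_zero, mul_zero]

end Aux

/-- for l ≥ 5, writing {A,B} = A∘B + B∘A,
{H_{η₁η₂η₃}, H_{η₄η₅η₁}} − {H_{η₁η₂η₄}, H_{η₃η₅η₁}} + {H_{η₁η₂η₅}, H_{η₃η₄η₁}} = 0,
realizing the fifth relation (lowest weight −(2ε₁+ε₂+ε₃+ε₄+ε₅)) of Table 2.1.2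
for h(0|2l). (Indices 0-based.) -/
theorem ham_relation5 (l : ℕ) (hl : 5 ≤ l)
    (pd : (Fin l ⊕ Fin l) → Module.End ℂ (Lam l))
    (hpd : ∀ a, IsContraction l a (pd a))
    (A B C D E F : Module.End ℂ (Lam l))
    (hA : A = Ham l pd (etav l ⟨0, by omega⟩ * etav l ⟨1, by omega⟩ * etav l ⟨2, by omega⟩))
    (hB : B = Ham l pd (etav l ⟨3, by omega⟩ * etav l ⟨4, by omega⟩ * etav l ⟨0, by omega⟩))
    (hC : C = Ham l pd (etav l ⟨0, by omega⟩ * etav l ⟨1, by omega⟩ * etav l ⟨3, by omega⟩))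
    (hD : D = Ham l pd (etav l ⟨2, by omega⟩ * etav l ⟨4, by omega⟩ * etav l ⟨0, by omega⟩))
    (hE : E = Ham l pd (etav l ⟨0, by omega⟩ * etav l ⟨1, by omega⟩ * etav l ⟨4, by omega⟩))
    (hF : F = Ham l pd (etav l ⟨2, by omega⟩ * etav l ⟨3, by omega⟩ * etav l ⟨0, by omega⟩)) :
    (A ∘ₗ B + B ∘ₗ A) - (C ∘ₗ D + D ∘ₗ C) + (E ∘ₗ F + F ∘ₗ E) = 0 := by
  subst hA hB hC hD hE hF
  rw [ham_anti hpd, ham_anti hpd, ham_anti hpd]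
  simp
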